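/- Fix z ∈ {0,1}^p. For each j ∈ [p] define β̄_{:,j} ∈ ℝ^p as follows: if z_j = 1, β̄_{:,j} is a minimizer of (1/2)‖X_{:,j} − X_{−j} β_{:,j}‖₂² + λ Σ_{i≠j} β_{i,j}² subject to |β_{i,j}| ≤ M z_i for all i and β_{j,j} = 0; if z_j = 0, β̄_{:,j} = 0. Define α ∈ ℝ^{n×p} by α_{:,j} = X_{:,j} − X_{−j} β̄_{:,j} if z_j = 1 and α_{:,j} = X_{:,j} if z_j = 0. Define Γ⁽¹⁾, Γ⁽²⁾ ∈ ℝ^{p×p} by: Γ⁽¹⁾_{i,j} = M|(X_{−j}ᵀα_{:,j})_i − 2λβ̄_{i,j}|/2 if z_i = z_j = 1, = M|(X_{−j}ᵀα_{:,j})_i|/2 if z_i = z_j = 0, = 0 if z_i = 1 and z_j = 0, = M|(X_{−j}ᵀα_{:,j})_i| if z_i = 0 and z_j = 1; and Γ⁽²⁾_{i,j} = M|(X_{−j}ᵀα_{:,j})_i − 2λβ̄_{i,j}|/2 if z_i = z_j = 1, = M|(X_{−j}ᵀα_{:,j})_i|/2 if z_i = z_j = 0, = M|(X_{−j}ᵀα_{:,j})_i|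 if z_i = 1 and z_j = 0, = 0 if z_i = 0 and z_j = 1. Then the vector g ∈ ℝ^p with coordinates g_i = −Σ_{j=1}^p ( Γ⁽¹⁾_{i,j} + Γ⁽²⁾_{j,i} + λ β̄_{j,i}² ) is a subgradient of the convex function F₁ : [0,1]^p → ℝ at the point z. -/

import Mathlib

open Matrix Finset Real

noncomputable section

/-- The value `F₁(z)`: the optimal value of the perspective-formulation convex
program with continuous variables `β, W, q` (the residuals `ξ_{:,j} = X_{:,j} −
X_{−j} β_{:,j}` have been substituted into the objective; `β_{i,i} = 0` makes
`X_{−j} β_{:,j} = Σ_{i≠j} β_{i,j} X_{:,i}`). -/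
def F1 {n p : ℕ} (X : Matrix (Fin n) (Fin p) ℝ) (lam M : ℝ) (z : Fin p → ℝ) : ℝ :=
  sInf {c : ℝ | ∃ β W q : Matrix (Fin p) (Fin p) ℝ,
    (∀ i j, 0 ≤ q i j) ∧ (∀ i j, (β i j) ^ 2 ≤ q i j * z j) ∧
    (∀ i j, |β i j| ≤ M * W i j) ∧ (∀ i j, W i j ≤ z i) ∧ (∀ i j, W i j ≤ z j) ∧
    (∀ i, β i i = 0) ∧
    c = (1 / 2) * (∑ j, ∑ k, (X k j - ∑ i ∈ Finset.univ.erase j, β i j * X k i) ^ 2)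
        + lam * ∑ j, ∑ i ∈ Finset.univ.erase j, q i j}

/-- The `j`-th restricted ridge-regression objective
`(1/2)‖X_{:,j} − X_{−j} b‖₂² + λ Σ_{i≠j} b_i²` (with `b_j = 0`). -/
def colObj {n p : ℕ} (X : Matrix (Fin n) (Fin p) ℝ) (lam : ℝ) (j : Fin p)
    (b : Fin p → ℝ) : ℝ :=
  (1 / 2) * (∑ k, (X k j - ∑ i ∈ Finset.univ.erase j, b i * X k i) ^ 2)
    + lam * ∑ i ∈ Finset.univ.erase j, (b i) ^ 2

/-!
`F₁(x)` is an infimum, so it suffices to bound the objective at every point `(β, W, q)`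
feasible for `x` from below by `Σⱼ colObj_j(β̄_{:,j}) + gᵀ(x − z)`; this quantity dominates
`F₁(z) + gᵀ(x − z)` because `(β̄, |β̄| / M, β̄²)` is feasible for `z`. Column by column, the
data-fit term is bounded below by its linearisation at `β̄`, and `λ q_{ij} ≥ λ β_{ij}² / x_j`
by the tangent of the perspective function at `(β̄_{ij}, 1)`. What remains are the terms
`dᵢⱼ (β_{ij} − β̄_{ij})` with `d = X_{−j}ᵀ α − 2λ β̄`; they are controlled by
`|β_{ij}| ≤ M min(x_i, x_j)` and, where `z_i = z_j = 1`, by the optimality of `β̄_{:,j}` over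
the box, which forces `M |dᵢⱼ| ≤ dᵢⱼ β̄_{ij}`.
-/

lemma le_zero_of_forall_le_mul {a K : ℝ} (h : ∀ s, 0 < s → s ≤ 1 → a ≤ s * K) : a ≤ 0 := by
  have hlim : Filter.Tendsto (fun s : ℝ => s * K) (nhdsWithin 0 (Set.Ioi 0)) (nhds 0) := by
    simpa using (Filter.tendsto_id.mul_const K).mono_left (nhdsWithin_le_nhds (a := (0 : ℝ)))
  refine ge_of_tendsto hlim ?_
  filter_upwards [Ioc_mem_nhdsGT zero_lt_one] with s hs using h s hs.1 hs.2

lemma mul_le_abs_mul_of_abs_le {a b c : ℝ} (h : |b| ≤ c) : a * b ≤ |a| * c :=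
  (le_abs_self _).trans (abs_mul a b ▸ mul_le_mul_of_nonneg_left h (abs_nonneg a))

lemma mul_abs_le_mul_of_forall_abs_le {a b c : ℝ} (hc : 0 ≤ c)
    (h : ∀ t, |t| ≤ c → a * (t - b) ≤ 0) : c * |a| ≤ a * b := by
  rcases le_or_gt 0 a with ha | ha
  · have := h c (abs_of_nonneg hc).le
    rw [abs_of_nonneg ha]; nlinarith
  · have := h (-c) (by rw [abs_neg, abs_of_nonneg hc])
    rw [abs_of_neg ha]; nlinarith

/-- The tangent plane of the perspective function `(b, x) ↦ b² / x` at `(c, 1)`. -/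
lemma two_mul_mul_sub_sq_mul_le {b c q x : ℝ} (hq : 0 ≤ q) (hx : 0 ≤ x) (h : b ^ 2 ≤ q * x) :
    2 * c * b - c ^ 2 * x ≤ q := by
  rcases hx.eq_or_lt with rfl | hx
  · have : b = 0 := by nlinarith [sq_nonneg b]
    simp [this, hq]
  · refine le_of_mul_le_mul_right ?_ hx
    nlinarith [sq_nonneg (b - c * x)]

lemma mul_sub_le_of_binary {M lam A bb b xi xj zi zj G1 G2 : ℝ}
    (hzi : zi = 0 ∨ zi = 1) (hzj : zj = 0 ∨ zj = 1) (hbi : |b| ≤ M * xi) (hbj : |b| ≤ M * xj)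
    (hbbi : zi = 0 → bb = 0) (hbbj : zj = 0 → bb = 0)
    (hopt : zi = 1 → zj = 1 → M * |A - 2 * lam * bb| ≤ (A - 2 * lam * bb) * bb)
    (hG1 : G1 = if zi = 1 ∧ zj = 1 then M * |A - 2 * lam * bb| / 2
      else if zi = 0 ∧ zj = 0 then M * |A| / 2
      else if zi = 1 ∧ zj = 0 then 0
      else M * |A|)
    (hG2 : G2 = if zi = 1 ∧ zj = 1 then M * |A - 2 * lam * bb| / 2
      else if zi = 0 ∧ zj = 0 then M * |A| / 2
      else if zi = 1 ∧ zj = 0 then M * |A|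
      else 0) :
    (A - 2 * lam * bb) * (b - bb) ≤ G1 * (xi - zi) + G2 * (xj - zj) := by
  have hi := mul_le_abs_mul_of_abs_le (a := A - 2 * lam * bb) hbi
  have hj := mul_le_abs_mul_of_abs_le (a := A - 2 * lam * bb) hbj
  rcases hzi with rfl | rfl <;> rcases hzj with rfl | rfl
  · simp only [hbbi rfl] at hG1 hG2 hi hj ⊢; norm_num [hG1, hG2] at hi hj ⊢; linarith
  · simp only [hbbi rfl] at hG1 hG2 hi hj ⊢; norm_num [hG1, hG2] at hi hj ⊢; linarith
  · simp only [hbbj rfl] at hG1 hG2 hi hj ⊢; norm_num [hG1, hG2] at hi hj ⊢; linarith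
  · have := hopt rfl rfl
    norm_num [hG1, hG2]
    linarith

def colResidual {n p : ℕ} (X : Matrix (Fin n) (Fin p) ℝ) (j : Fin p) (b : Fin p → ℝ)
    (k : Fin n) : ℝ :=
  X k j - ∑ i ∈ univ.erase j, b i * X k i

/-- For `i ≠ j`, this is `-∂(colObj X lam j) / ∂bᵢ`. -/
def colNegGrad {n p : ℕ} (X : Matrix (Fin n) (Fin p) ℝ) (lam : ℝ) (j : Fin p)
    (b : Fin p → ℝ) (i : Fin p) : ℝ :=
  ∑ k, X k i * colResidual X j b k - 2 * lam * b i

section colObj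

variable {n p : ℕ} (X : Matrix (Fin n) (Fin p) ℝ) (lam : ℝ) (j : Fin p)

lemma colObj_eq (b : Fin p → ℝ) :
    colObj X lam j b = (1 / 2) * ∑ k, colResidual X j b k ^ 2 + lam * ∑ i ∈ univ.erase j, b i ^ 2 :=
  rfl

lemma colObj_add_smul (b d : Fin p → ℝ) (s : ℝ) :
    colObj X lam j (b + s • d)
      = colObj X lam j b - s * ∑ i ∈ univ.erase j, d i * colNegGrad X lam j b i
      + s ^ 2 * ((1 / 2) * ∑ k, (∑ i ∈ univ.erase j, d i * X k i) ^ 2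
        + lam * ∑ i ∈ univ.erase j, d i ^ 2) := by
  set δ : Fin n → ℝ := fun k => ∑ i ∈ univ.erase j, d i * X k i
  have hres : ∀ k, colResidual X j (b + s • d) k = colResidual X j b k - s * δ k := by
    intro k
    simp only [colResidual, δ, Pi.add_apply, Pi.smul_apply, smul_eq_mul, add_mul, sum_add_distrib,
      mul_sum, mul_assoc]
    ring
  have hcross : ∑ k, colResidual X j b k * δ k
      = ∑ i ∈ univ.erase j, d i * ∑ k, X k i * colResidual X j b k := by
    simp only [δ, mul_sum]
    rw [sum_comm]
    exact sum_congr rfl fun _ _ => sum_congr rfl fun _ _ => by ring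
  have hfit : ∑ k, colResidual X j (b + s • d) k ^ 2
      = ∑ k, colResidual X j b k ^ 2 - 2 * s * ∑ k, colResidual X j b k * δ k
        + s ^ 2 * ∑ k, δ k ^ 2 := by
    simp only [hres, mul_sum, ← sum_sub_distrib, ← sum_add_distrib]
    exact sum_congr rfl fun _ _ => by ring
  have hpen : ∑ i ∈ univ.erase j, (b + s • d) i ^ 2
      = ∑ i ∈ univ.erase j, b i ^ 2 + 2 * s * ∑ i ∈ univ.erase j, d i * b i
        + s ^ 2 * ∑ i ∈ univ.erase j, d i ^ 2 := by
    simp only [mul_sum, ← sum_add_distrib]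
    exact sum_congr rfl fun _ _ => by simp only [Pi.add_apply, Pi.smul_apply, smul_eq_mul]; ring
  have hgrad : ∑ i ∈ univ.erase j, d i * colNegGrad X lam j b i
      = ∑ k, colResidual X j b k * δ k - 2 * lam * ∑ i ∈ univ.erase j, d i * b i := by
    rw [hcross, mul_sum, ← sum_sub_distrib]
    exact sum_congr rfl fun _ _ => by rw [colNegGrad]; ring
  rw [colObj_eq, colObj_eq, hfit, hpen, hgrad]
  ring

lemma half_sum_sq_colResidual_sub_le (b c : Fin p → ℝ) :
    (1 / 2) * ∑ k, colResidual X j b k ^ 2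
        - ∑ i ∈ univ.erase j, (c i - b i) * ∑ k, X k i * colResidual X j b k
      ≤ (1 / 2) * ∑ k, colResidual X j c k ^ 2 := by
  have hexp := colObj_add_smul X 0 j b (c - b) 1
  simp only [one_smul, add_sub_cancel, colObj_eq, colNegGrad, zero_mul, add_zero, one_pow,
    one_mul, mul_zero, sub_zero] at hexp
  rw [hexp]
  have : 0 ≤ ∑ k, (∑ i ∈ univ.erase j, (c - b) i * X k i) ^ 2 := sum_nonneg fun _ _ => sq_nonneg _
  simp only [Pi.sub_apply] at this ⊢
  linarith

lemma colObj_sub_le_perspective (hlam : 0 ≤ lam) (bb β q : Fin p → ℝ) {x : ℝ} (hx : 0 ≤ x)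
    (hq : ∀ i, 0 ≤ q i) (hβq : ∀ i, β i ^ 2 ≤ q i * x) :
    colObj X lam j bb
        - ∑ i ∈ univ.erase j, (colNegGrad X lam j bb i * (β i - bb i) + lam * bb i ^ 2 * (x - 1))
      ≤ (1 / 2) * ∑ k, colResidual X j β k ^ 2 + lam * ∑ i ∈ univ.erase j, q i := by
  have hfit := half_sum_sq_colResidual_sub_le X j bb β
  have hpen : ∑ i ∈ univ.erase j, lam * (2 * bb i * β i - bb i ^ 2 * x)
      ≤ lam * ∑ i ∈ univ.erase j, q i := by
    rw [mul_sum]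
    exact sum_le_sum fun i _ =>
      mul_le_mul_of_nonneg_left (two_mul_mul_sub_sq_mul_le (hq i) hx (hβq i)) hlam
  have hsplit :
      ∑ i ∈ univ.erase j, (colNegGrad X lam j bb i * (β i - bb i) + lam * bb i ^ 2 * (x - 1))
        = ∑ i ∈ univ.erase j, (β i - bb i) * ∑ k, X k i * colResidual X j bb k
          + lam * ∑ i ∈ univ.erase j, bb i ^ 2
          - ∑ i ∈ univ.erase j, lam * (2 * bb i * β i - bb i ^ 2 * x) := by
    rw [mul_sum, ← sum_add_distrib, ← sum_sub_distrib]
    exact sum_congr rfl fun i _ => by rw [colNegGrad]; ring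
  rw [colObj_eq, hsplit]
  linarith

lemma colNegGrad_mul_sub_nonpos {c bb : Fin p → ℝ} (hbbj : bb j = 0) (hbb : ∀ i, |bb i| ≤ c i)
    (hmin : ∀ b : Fin p → ℝ, b j = 0 → (∀ i, |b i| ≤ c i) → colObj X lam j bb ≤ colObj X lam j b)
    {i : Fin p} (hij : i ≠ j) {t : ℝ} (ht : |t| ≤ c i) :
    colNegGrad X lam j bb i * (t - bb i) ≤ 0 := by
  set u := t - bb i
  set d : Fin p → ℝ := Pi.single i u
  obtain ⟨Q, hexp⟩ : ∃ Q, ∀ s, colObj X lam j (bb + s • d)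
      = colObj X lam j bb - s * (colNegGrad X lam j bb i * u) + s ^ 2 * Q := by
    have hlin : ∑ i' ∈ univ.erase j, d i' * colNegGrad X lam j bb i'
        = colNegGrad X lam j bb i * u := by
      simp [d, Pi.single_apply, hij, mul_comm]
    exact ⟨_, fun s => by rw [colObj_add_smul, hlin]⟩
  -- optimality along the segment from `bb` towards the box point `Function.update bb i t`
  refine le_zero_of_forall_le_mul (K := Q) fun s hs hs1 => ?_
  have hfeas : ∀ i', |(bb + s • d) i'| ≤ c i' := by
    intro i'
    rcases eq_or_ne i' i with rfl | hi'
    · have h1 := abs_le.1 (hbb i')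
      have h2 := abs_le.1 ht
      simp only [d, Pi.add_apply, Pi.smul_apply, Pi.single_eq_same, smul_eq_mul, u, abs_le]
      constructor <;> nlinarith
    · simpa [d, hi'] using hbb i'
  have := hmin _ (by simp [d, hbbj, hij.symm]) hfeas
  rw [hexp] at this
  nlinarith

lemma mul_abs_colNegGrad_le {c bb : Fin p → ℝ} (hbbj : bb j = 0) (hbb : ∀ i, |bb i| ≤ c i)
    (hmin : ∀ b : Fin p → ℝ, b j = 0 → (∀ i, |b i| ≤ c i) → colObj X lam j bb ≤ colObj X lam j b)
    {i : Fin p} (hij : i ≠ j) (hc : 0 ≤ c i) :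
    c i * |colNegGrad X lam j bb i| ≤ colNegGrad X lam j bb i * bb i :=
  mul_abs_le_mul_of_forall_abs_le hc fun _ ht =>
    colNegGrad_mul_sub_nonpos X lam j hbbj hbb hmin hij ht

end colObj

section F1

variable {n p : ℕ} (X : Matrix (Fin n) (Fin p) ℝ) (lam M : ℝ)

def F1Feasible (z : Fin p → ℝ) (β W q : Matrix (Fin p) (Fin p) ℝ) : Prop :=
  (∀ i j, 0 ≤ q i j) ∧ (∀ i j, (β i j) ^ 2 ≤ q i j * z j) ∧
    (∀ i j, |β i j| ≤ M * W i j) ∧ (∀ i j, W i j ≤ z i) ∧ (∀ i j, W i j ≤ z j) ∧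
    (∀ i, β i i = 0)

def f1Objective (β q : Matrix (Fin p) (Fin p) ℝ) : ℝ :=
  ∑ j, ((1 / 2) * ∑ k, colResidual X j (fun i => β i j) k ^ 2 + lam * ∑ i ∈ univ.erase j, q i j)

lemma F1Feasible.abs_le_left {z : Fin p → ℝ} {β W q : Matrix (Fin p) (Fin p) ℝ}
    (h : F1Feasible M z β W q) (hM : 0 ≤ M) (i j : Fin p) : |β i j| ≤ M * z i :=
  (h.2.2.1 i j).trans (mul_le_mul_of_nonneg_left (h.2.2.2.1 i j) hM)

lemma F1Feasible.abs_le_right {z : Fin p → ℝ} {β W q : Matrix (Fin p) (Fin p) ℝ}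
    (h : F1Feasible M z β W q) (hM : 0 ≤ M) (i j : Fin p) : |β i j| ≤ M * z j :=
  (h.2.2.1 i j).trans (mul_le_mul_of_nonneg_left (h.2.2.2.2.1 i j) hM)

lemma F1_eq_sInf (z : Fin p → ℝ) :
    F1 X lam M z = sInf {c | ∃ β W q, F1Feasible M z β W q ∧ c = f1Objective X lam β q} := by
  simp only [F1, F1Feasible, f1Objective, colResidual, sum_add_distrib, ← mul_sum, and_assoc]

lemma bddBelow_f1Objective (hlam : 0 ≤ lam) (z : Fin p → ℝ) :
    BddBelow {c | ∃ β W q, F1Feasible M z β W q ∧ c = f1Objective X lam β q} := by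
  refine ⟨0, ?_⟩
  rintro c ⟨β, W, q, ⟨hq, -⟩, rfl⟩
  exact sum_nonneg fun j _ => add_nonneg (by positivity)
    (mul_nonneg hlam (sum_nonneg fun i _ => hq i j))

lemma F1_le_f1Objective (hlam : 0 ≤ lam) {z : Fin p → ℝ} {β W q : Matrix (Fin p) (Fin p) ℝ}
    (h : F1Feasible M z β W q) : F1 X lam M z ≤ f1Objective X lam β q := by
  rw [F1_eq_sInf]
  exact csInf_le (bddBelow_f1Objective X lam M hlam z) ⟨β, W, q, h, rfl⟩

lemma le_F1_of_forall_feasible {x : Fin p → ℝ} (hx : ∀ i, 0 ≤ x i) {c : ℝ}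
    (h : ∀ β W q, F1Feasible M x β W q → c ≤ f1Objective X lam β q) : c ≤ F1 X lam M x := by
  rw [F1_eq_sInf]
  refine le_csInf ⟨_, 0, 0, 0, ?_, rfl⟩ ?_
  · simp [F1Feasible, hx]
  · rintro _ ⟨β, W, q, hfeas, rfl⟩
    exact h β W q hfeas

lemma F1_le_sum_colObj (hlam : 0 ≤ lam) (hM : 0 < M) {z : Fin p → ℝ}
    (hz : ∀ i, z i = 0 ∨ z i = 1) {bb : Matrix (Fin p) (Fin p) ℝ} (hdiag : ∀ i, bb i i = 0)
    (hbb0 : ∀ j, z j = 0 → ∀ i, bb i j = 0) (hbb : ∀ i j, |bb i j| ≤ M * z i) :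
    F1 X lam M z ≤ ∑ j, colObj X lam j (fun i => bb i j) := by
  refine (F1_le_f1Objective X lam M hlam (W := fun i j => |bb i j| / M)
    (q := fun i j => bb i j ^ 2) ⟨fun _ _ => sq_nonneg _, fun i j => ?_, fun i j => ?_,
      fun i j => ?_, fun i j => ?_, hdiag⟩).trans_eq rfl
  · rcases hz j with h | h <;> simp [h, hbb0 j]
  · rw [mul_div_cancel₀ _ hM.ne']
  · rw [div_le_iff₀' hM]; exact hbb i j
  · rw [div_le_iff₀' hM]
    rcases hz j with h | h
    · simp [h, hbb0 j h i]
    · rw [h]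
      exact (hbb i j).trans
        (mul_le_mul_of_nonneg_left (by rcases hz i with h' | h' <;> simp [h']) hM.le)

end F1

lemma sum_colObj_sub_le_f1Objective {n p : ℕ} (X : Matrix (Fin n) (Fin p) ℝ) {lam M : ℝ}
    (hlam : 0 ≤ lam) {x z : Fin p → ℝ} (hx : ∀ i, 0 ≤ x i)
    {bb A G1 G2 β W q : Matrix (Fin p) (Fin p) ℝ}
    (hbbdiag : ∀ i, bb i i = 0) (hbbz : ∀ i j, bb i j ^ 2 * z j = bb i j ^ 2)
    (hA : ∀ i j, i ≠ j → colNegGrad X lam j (fun i => bb i j) i = A i j - 2 * lam * bb i j)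
    (hfeas : F1Feasible M x β W q)
    (hpair : ∀ i j, (A i j - 2 * lam * bb i j) * (β i j - bb i j)
      ≤ G1 i j * (x i - z i) + G2 i j * (x j - z j)) :
    ∑ j, colObj X lam j (fun i => bb i j)
        - ∑ i, ∑ j, (G1 i j + G2 j i + lam * bb j i ^ 2) * (x i - z i)
      ≤ f1Objective X lam β q := by
  obtain ⟨hq, hβq, -, -, -, hβdiag⟩ := hfeas
  set T : Fin p → Fin p → ℝ := fun i j =>
    (A i j - 2 * lam * bb i j) * (β i j - bb i j) + lam * bb i j ^ 2 * (x j - z j)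
  have hcol : ∀ j, colObj X lam j (fun i => bb i j) - ∑ i, T i j
      ≤ (1 / 2) * ∑ k, colResidual X j (fun i => β i j) k ^ 2
        + lam * ∑ i ∈ univ.erase j, q i j := by
    intro j
    rw [← sum_erase _ (a := j) (by simp [T, hbbdiag, hβdiag])]
    convert colObj_sub_le_perspective X lam j hlam (fun i => bb i j) (fun i => β i j)
      (fun i => q i j) (hx j) (fun i => hq i j) (fun i => hβq i j) using 3 with i hi
    rw [hA i j (ne_of_mem_erase hi)]
    linear_combination -lam * hbbz i j
  have hswap : ∑ i, ∑ j, (G1 i j + G2 j i + lam * bb j i ^ 2) * (x i - z i)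
      = ∑ j, ∑ i, (G1 i j * (x i - z i) + G2 i j * (x j - z j)
          + lam * bb i j ^ 2 * (x j - z j)) := by
    simp only [add_mul, sum_add_distrib]
    rw [sum_comm (f := fun i j => G1 i j * (x i - z i))]
  calc ∑ j, colObj X lam j (fun i => bb i j)
        - ∑ i, ∑ j, (G1 i j + G2 j i + lam * bb j i ^ 2) * (x i - z i)
      ≤ ∑ j, (colObj X lam j (fun i => bb i j) - ∑ i, T i j) := by
        rw [hswap, sum_sub_distrib]
        gcongr with j _ i _
        linarith [hpair i j]
    _ ≤ f1Objective X lam β q := sum_le_sum fun j _ => hcol j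

/-- **Proposition (subgradient).** For binary `z`, with `β̄` the column-wise
minimizers, `α` the residual matrix, and `Γ⁽¹⁾, Γ⁽²⁾` as in the statement, the
vector `g` with `g_i = −Σ_j (Γ⁽¹⁾_{i,j} + Γ⁽²⁾_{j,i} + λ β̄_{j,i}²)` is a
subgradient of `F₁` at `z` on `[0,1]^p`. -/
theorem stmt8 (n p : ℕ) (X : Matrix (Fin n) (Fin p) ℝ) (lam M : ℝ)
    (hlam : 0 ≤ lam) (hM : 0 < M)
    (z : Fin p → ℝ) (hz : ∀ i, z i = 0 ∨ z i = 1)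
    (βbar : Matrix (Fin p) (Fin p) ℝ)
    (hβbar0 : ∀ j, z j = 0 → ∀ i, βbar i j = 0)
    (hβbar1 : ∀ j, z j = 1 →
      βbar j j = 0 ∧ (∀ i, |βbar i j| ≤ M * z i) ∧
      ∀ b : Fin p → ℝ, b j = 0 → (∀ i, |b i| ≤ M * z i) →
        colObj X lam j (fun i => βbar i j) ≤ colObj X lam j b)
    (α : Matrix (Fin n) (Fin p) ℝ)
    (hα : ∀ k j, α k j =
      if z j = 1 then X k j - ∑ i ∈ Finset.univ.erase j, βbar i j * X k i
      else X k j)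
    -- `XtA i j = (X_{−j}ᵀ α_{:,j})_i`
    (XtA : Matrix (Fin p) (Fin p) ℝ)
    (hXtA : ∀ i j, XtA i j = ∑ k, (if i = j then 0 else X k i) * α k j)
    (Γ1 Γ2 : Matrix (Fin p) (Fin p) ℝ)
    (hΓ1 : ∀ i j, Γ1 i j =
      if z i = 1 ∧ z j = 1 then M * |XtA i j - 2 * lam * βbar i j| / 2
      else if z i = 0 ∧ z j = 0 then M * |XtA i j| / 2
      else if z i = 1 ∧ z j = 0 then 0
      else M * |XtA i j|)
    (hΓ2 : ∀ i j, Γ2 i j =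
      if z i = 1 ∧ z j = 1 then M * |XtA i j - 2 * lam * βbar i j| / 2
      else if z i = 0 ∧ z j = 0 then M * |XtA i j| / 2
      else if z i = 1 ∧ z j = 0 then M * |XtA i j|
      else 0)
    (g : Fin p → ℝ)
    (hg : ∀ i, g i = -∑ j, (Γ1 i j + Γ2 j i + lam * (βbar j i) ^ 2)) :
    ∀ x : Fin p → ℝ, (∀ i, x i ∈ Set.Icc (0 : ℝ) 1) →
      F1 X lam M z + ∑ i, g i * (x i - z i) ≤ F1 X lam M x := by
  intro x hx
  have hx0 : ∀ i, 0 ≤ x i := fun i => (hx i).1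
  have hβbar_diag : ∀ j, βbar j j = 0 := fun j =>
    (hz j).elim (fun h => hβbar0 j h j) fun h => (hβbar1 j h).1
  have hβbar_box : ∀ i j, |βbar i j| ≤ M * z i := by
    intro i j
    rcases hz j with h | h
    · rw [hβbar0 j h i, abs_zero]
      rcases hz i with h' | h' <;> simp [h', hM.le]
    · exact (hβbar1 j h).2.1 i
  have hβbar_row : ∀ i j, z i = 0 → βbar i j = 0 := fun i j h =>
    abs_nonpos_iff.1 (by simpa [h] using hβbar_box i j)
  have hβbar_sq : ∀ i j, βbar i j ^ 2 * z j = βbar i j ^ 2 := fun i j => by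
    rcases hz j with h | h <;> simp [h, hβbar0 j]
  have hgrad : ∀ i j, i ≠ j →
      colNegGrad X lam j (fun i => βbar i j) i = XtA i j - 2 * lam * βbar i j := by
    intro i j hij
    have hres : ∀ k, α k j = colResidual X j (fun i => βbar i j) k := fun k => by
      rw [hα]
      split_ifs with h
      · rfl
      · simp [colResidual, hβbar0 j ((hz j).resolve_right h)]
    simp [colNegGrad, hXtA, hij, hres]
  have hopt : ∀ i j, z i = 1 → z j = 1 →
      M * |XtA i j - 2 * lam * βbar i j| ≤ (XtA i j - 2 * lam * βbar i j) * βbar i j := by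
    intro i j hzi hzj
    obtain ⟨hjj, hbox, hmin⟩ := hβbar1 j hzj
    rcases eq_or_ne i j with rfl | hij
    · simp [hXtA, hjj]
    · simpa [hzi, hgrad i j hij] using mul_abs_colNegGrad_le X lam j (c := fun i => M * z i)
        (bb := fun i => βbar i j) hjj hbox hmin hij (by simp [hzi, hM.le])
  rw [show ∑ i, g i * (x i - z i)
      = -∑ i, ∑ j, (Γ1 i j + Γ2 j i + lam * βbar j i ^ 2) * (x i - z i) by
    simp only [hg, neg_mul, sum_mul, sum_neg_distrib], ← sub_eq_add_neg]
  refine (sub_le_sub_right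
      (F1_le_sum_colObj X lam M hlam hM hz hβbar_diag hβbar0 hβbar_box) _).trans
    (le_F1_of_forall_feasible X lam M hx0 fun β W q hfeas => ?_)
  exact sum_colObj_sub_le_f1Objective X hlam hx0 hβbar_diag hβbar_sq hgrad hfeas fun i j =>
    mul_sub_le_of_binary (hz i) (hz j) (hfeas.abs_le_left M hM.le i j)
      (hfeas.abs_le_right M hM.le i j) (hβbar_row i j) (hβbar0 j · i) (hopt i j) (hΓ1 i j) (hΓ2 i j)

end
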